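/- arXiv:2102.07465 — 2 statements merged into one kernel-verified Lean document; each statement's English description precedes it below -/
import Mathlib

section
/- If G is a finite group and H ≤ G is a subgroup containing a conjugate of every cyclic subgroup of G (i.e., for every g ∈ G there exists x ∈ G with x⟨g⟩x⁻¹ ≤ H), then H = G. -/
/-- If a subgroup `H` of a finite group `G` contains a conjugate of every cyclic
subgroup of `G`, then `H = G`. -/
theorem subgroup_containing_conjugate_of_every_cyclic_subgroup_eq_top
    {G : Type*} [Group G] [Finite G] (H : Subgroup G)
    (h : ∀ g : G, ∃ x : G,
      (Subgroup.zpowers g).map (MulAut.conj x).toMonoidHom ≤ H) :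
    H = ⊤ := by
  classical
  have := Fintype.ofFinite G
  -- reduce hypothesis to: every g has a conjugate in H
  have h' : ∀ g : G, ∃ x : G, x * g * x⁻¹ ∈ H := by
    intro g
    obtain ⟨x, hx⟩ := h g
    exact ⟨x, hx ⟨g, Subgroup.mem_zpowers g, rfl⟩⟩
  -- the conjugates of H indexed by cosets
  have := Fintype.ofFinite (G ⧸ H)
  set T : G ⧸ H → Finset G :=
    fun q => (Finset.univ.image (fun h : H => q.out * (h : G) * q.out⁻¹)).erase 1 with hT
  -- every nonidentity element lies in some T q
  have hcover : (Finset.univ.erase (1 : G)) ⊆ Finset.univ.biUnion T := by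
    intro g hg
    rw [Finset.mem_erase] at hg
    obtain ⟨x, hx⟩ := h' g
    refine Finset.mem_biUnion.2 ⟨QuotientGroup.mk x⁻¹, Finset.mem_univ _, ?_⟩
    set q : G ⧸ H := QuotientGroup.mk x⁻¹ with hq
    have hout : (x⁻¹)⁻¹ * q.out ∈ H := by
      rw [← QuotientGroup.eq]
      exact (QuotientGroup.out_eq' q).symm
    rw [inv_inv] at hout
    set h₀ : G := x * q.out with hh₀
    have hmem : q.out⁻¹ * g * q.out ∈ H := by
      have : q.out⁻¹ * g * q.out = h₀⁻¹ * (x * g * x⁻¹) * h₀ := by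
        simp [hh₀, mul_assoc]
      rw [this]
      exact H.mul_mem (H.mul_mem (H.inv_mem hout) hx) hout
    rw [hT]
    refine Finset.mem_erase.2 ⟨hg.1, Finset.mem_image.2 ⟨⟨_, hmem⟩, Finset.mem_univ _, ?_⟩⟩
    group
  -- cardinality bound on each T q
  have hTcard : ∀ q : G ⧸ H, (T q).card ≤ Nat.card H - 1 := by
    intro q
    have h1 : (1 : G) ∈ Finset.univ.image (fun h : H => q.out * (h : G) * q.out⁻¹) :=
      Finset.mem_image.2 ⟨1, Finset.mem_univ _, by simp⟩
    rw [hT]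
    calc ((Finset.univ.image (fun h : H => q.out * (h : G) * q.out⁻¹)).erase 1).card
        = (Finset.univ.image (fun h : H => q.out * (h : G) * q.out⁻¹)).card - 1 :=
          Finset.card_erase_of_mem h1
      _ ≤ Fintype.card H - 1 := by
          gcongr
          exact (Finset.card_image_le).trans (by simp)
      _ = Nat.card H - 1 := by rw [Nat.card_eq_fintype_card]
  -- counting
  have hbound : Fintype.card G - 1 ≤ H.index * (Nat.card H - 1) := by
    calc Fintype.card G - 1 = (Finset.univ.erase (1 : G)).card := by
          rw [Finset.card_erase_of_mem (Finset.mem_univ _), Finset.card_univ]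
      _ ≤ (Finset.univ.biUnion T).card := Finset.card_le_card hcover
      _ ≤ ∑ q : G ⧸ H, (T q).card := Finset.card_biUnion_le
      _ ≤ ∑ _q : G ⧸ H, (Nat.card H - 1) := Finset.sum_le_sum fun q _ => hTcard q
      _ = Fintype.card (G ⧸ H) * (Nat.card H - 1) := by
          rw [Finset.sum_const, Finset.card_univ, smul_eq_mul]
      _ = H.index * (Nat.card H - 1) := by
          simp [Subgroup.index, Nat.card_eq_fintype_card]
  have hmul : H.index * Nat.card H = Nat.card G := H.index_mul_card
  have hHpos : 0 < Nat.card H := Nat.card_pos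
  have hGpos : 0 < Nat.card G := Nat.card_pos
  have hipos : 0 < H.index := by
    rcases Nat.eq_zero_or_pos H.index with h0 | h1
    · rw [h0, zero_mul] at hmul; omega
    · exact h1
  have hGcard : Nat.card G = Fintype.card G := Nat.card_eq_fintype_card
  rw [← Subgroup.index_eq_one]
  have hdist : H.index * (Nat.card H - 1) = H.index * Nat.card H - H.index := by
    rw [Nat.mul_sub, mul_one]
  have hle : H.index ≤ H.index * Nat.card H := Nat.le_mul_of_pos_right _ hHpos
  omega
end

section
/- Let K be a field of characteristic 0 and q a prime with a primitive q-th root of unity in K. In the field F₀ = Frac(K[[V,U]]), the element a = U/(U−V) is not a d-th power in F₀ for any d > 1; consequently F₀(a^{1/q})/F₀ is a cyclic extension of degree q. -/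
/-!
View `F₀ = Frac(K⟦V⟧⟦U⟧)` with `U` as the outer variable. The `U`-adic order of `U / (U - V)` is
`1`, since `U - V` has constant coefficient `-V ≠ 0`, whereas every `d`-th power in `F₀` has order
divisible by `d`. So `X ^ q - a` is irreducible, and since `F₀` contains a primitive `q`-th root of
unity, adjoining one root of it already gives its splitting field, a cyclic Kummer extension.
-/

open PowerSeries IntermediateField

namespace PowerSeries

variable {R : Type*}

theorem pow_mul_ne_X_mul_pow [Semiring R] [NoZeroDivisors R] [Nontrivial R] {d : ℕ} (hd : 1 < d)
    {u : R⟦X⟧} (hu : u.order = 0) (r : R⟦X⟧) {s : R⟦X⟧} (hs : s ≠ 0) :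
    r ^ d * u ≠ X * s ^ d := by
  intro h
  have hr : r ≠ 0 := by
    rintro rfl
    rw [zero_pow (by omega), zero_mul] at h
    exact mul_ne_zero X_ne_zero (pow_ne_zero d hs) h.symm
  have horder := congrArg order h
  rw [order_mul, order_mul, order_pow, order_pow, hu, add_zero, order_X] at horder
  obtain ⟨m, hm⟩ := ENat.ne_top_iff_exists.mp (order_eq_top.not.mpr hr)
  obtain ⟨n, hn⟩ := ENat.ne_top_iff_exists.mp (order_eq_top.not.mpr hs)
  rw [← hm, ← hn, nsmul_eq_mul, nsmul_eq_mul] at horder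
  have hmn : d * m = 1 + d * n := by exact_mod_cast horder
  have hd1 : d ∣ 1 := (Nat.dvd_add_left (dvd_mul_right d n)).mp (hmn ▸ dvd_mul_right d m)
  exact absurd (Nat.le_of_dvd one_pos hd1) (by omega)

theorem pow_ne_X_div [CommRing R] [IsDomain R] {L : Type*} [Field L] [Algebra R⟦X⟧ L]
    [IsFractionRing R⟦X⟧ L] {d : ℕ} (hd : 1 < d) {u : R⟦X⟧} (hu : u.order = 0) (y : L) :
    y ^ d ≠ algebraMap R⟦X⟧ L X / algebraMap R⟦X⟧ L u := by
  obtain ⟨r, s, hs, rfl⟩ := IsFractionRing.div_surjective R⟦X⟧ y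
  have hu0 : u ≠ 0 := by
    rintro rfl
    simp at hu
  have hs' : algebraMap R⟦X⟧ L s ^ d ≠ 0 :=
    pow_ne_zero d (IsFractionRing.to_map_ne_zero_of_mem_nonZeroDivisors hs)
  have hu' : algebraMap R⟦X⟧ L u ≠ 0 :=
    (map_ne_zero_iff _ (IsFractionRing.injective R⟦X⟧ L)).mpr hu0
  rw [div_pow, ← map_pow, ← map_pow, Ne, div_eq_div_iff (by rwa [map_pow]) hu', ← map_mul,
    ← map_mul, (IsFractionRing.injective R⟦X⟧ L).eq_iff]
  exact pow_mul_ne_X_mul_pow hd hu r (nonZeroDivisors.ne_zero hs)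

end PowerSeries

namespace IntermediateField

variable {F E : Type*} [Field F] [Field E] [Algebra F E]

theorem isSplittingField_adjoin_X_pow_sub_C {n : ℕ} (hF : (primitiveRoots n F).Nonempty) {a : F}
    (H : Irreducible (Polynomial.X ^ n - Polynomial.C a)) {α : E} (hα : α ^ n = algebraMap F E a) :
    Polynomial.IsSplittingField F F⟮α⟯ (Polynomial.X ^ n - Polynomial.C a) := by
  have hn : n ≠ 0 := ne_zero_of_irreducible_X_pow_sub_C H
  have hroot : Polynomial.aeval α (Polynomial.X ^ n - Polynomial.C a) = 0 := by simp [hα]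
  have hmonic := Polynomial.monic_X_pow_sub_C a hn
  have hmin : minpoly F α = Polynomial.X ^ n - Polynomial.C a :=
    (minpoly.eq_of_irreducible_of_monic H hroot hmonic).symm
  have := Fact.mk H
  have := isSplittingField_AdjoinRoot_X_pow_sub_C hF H
  exact Polynomial.IsSplittingField.of_algEquiv _ _ ((AdjoinRoot.algEquivOfEq F _ _ hmin.symm).trans
    (adjoinRootEquivAdjoin F ⟨_, hmonic, hroot⟩))

theorem finrank_adjoin_eq_and_isGalois_and_isCyclic_of_pow_eq {q : ℕ} (hq : q.Prime) {ζ : F}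
    (hζ : IsPrimitiveRoot ζ q) {a : F} (ha : ∀ b : F, b ^ q ≠ a) {α : E}
    (hα : α ^ q = algebraMap F E a) :
    Module.finrank F F⟮α⟯ = q ∧ IsGalois F F⟮α⟯ ∧ IsCyclic (F⟮α⟯ ≃ₐ[F] F⟮α⟯) := by
  have hF : (primitiveRoots q F).Nonempty := ⟨ζ, (mem_primitiveRoots hq.pos).mpr hζ⟩
  have H := X_pow_sub_C_irreducible_of_prime hq ha
  have := isSplittingField_adjoin_X_pow_sub_C hF H hα
  have := Fact.mk hq
  exact ⟨finrank_of_isSplittingField_X_pow_sub_C hF H _,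
    isGalois_of_isSplittingField_X_pow_sub_C hF H _,
    isCyclic_of_isSplittingField_X_pow_sub_C hF H _⟩

end IntermediateField

theorem frac_power_series_two_vars_not_power_and_cyclic_general
    (K : Type*) [Field K] (q : ℕ) (hq : q.Prime)
    (ζ : K) (hζ : IsPrimitiveRoot ζ q) :
    ∀ a : FractionRing (PowerSeries (PowerSeries K)),
      a = algebraMap (PowerSeries (PowerSeries K)) _ (PowerSeries.X) /
          algebraMap (PowerSeries (PowerSeries K)) _
            (PowerSeries.X - PowerSeries.C (PowerSeries.X : PowerSeries K)) →
      (∀ d : ℕ, 1 < d → ∀ y : FractionRing (PowerSeries (PowerSeries K)), y ^ d ≠ a) ∧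
      (∀ α : AlgebraicClosure (FractionRing (PowerSeries (PowerSeries K))),
        α ^ q = algebraMap _ _ a →
        Module.finrank (FractionRing (PowerSeries (PowerSeries K)))
          (IntermediateField.adjoin (FractionRing (PowerSeries (PowerSeries K))) {α}) = q ∧
        IsGalois (FractionRing (PowerSeries (PowerSeries K)))
          (IntermediateField.adjoin (FractionRing (PowerSeries (PowerSeries K))) {α}) ∧
        IsCyclic ((IntermediateField.adjoin (FractionRing (PowerSeries (PowerSeries K))) {α}) ≃ₐ[FractionRing (PowerSeries (PowerSeries K))]
          (IntermediateField.adjoin (FractionRing (PowerSeries (PowerSeries K))) {α}))) := by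
  rintro a rfl
  have horder : (X - C (X : K⟦X⟧) : K⟦X⟧⟦X⟧).order = 0 := by
    rw [← not_ne_iff, order_ne_zero_iff_constCoeff_eq_zero]
    simp
  refine ⟨fun d hd => pow_ne_X_div hd horder, fun α hα => ?_⟩
  exact finrank_adjoin_eq_and_isGalois_and_isCyclic_of_pow_eq hq
    (hζ.map_of_injective (algebraMap K _).injective) (pow_ne_X_div hq.one_lt horder) hα

/-- In `F₀ = Frac(K[[V,U]])` (`K` of characteristic 0 containing a primitive `q`-th
root of unity, `q` prime), the element `a = U/(U−V)` is not a `d`-th power for any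
`d > 1`; consequently `F₀(a^{1/q})/F₀` is a cyclic extension of degree `q`. -/
theorem frac_power_series_two_vars_not_power_and_cyclic
    (K : Type*) [Field K] [CharZero K] (q : ℕ) (hq : q.Prime)
    (ζ : K) (hζ : IsPrimitiveRoot ζ q) :
    ∀ a : FractionRing (PowerSeries (PowerSeries K)),
      a = algebraMap (PowerSeries (PowerSeries K)) _ (PowerSeries.X) /
          algebraMap (PowerSeries (PowerSeries K)) _
            (PowerSeries.X - PowerSeries.C (PowerSeries.X : PowerSeries K)) →
      (∀ d : ℕ, 1 < d → ∀ y : FractionRing (PowerSeries (PowerSeries K)), y ^ d ≠ a) ∧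
      (∀ α : AlgebraicClosure (FractionRing (PowerSeries (PowerSeries K))),
        α ^ q = algebraMap _ _ a →
        Module.finrank (FractionRing (PowerSeries (PowerSeries K)))
          (IntermediateField.adjoin (FractionRing (PowerSeries (PowerSeries K))) {α}) = q ∧
        IsGalois (FractionRing (PowerSeries (PowerSeries K)))
          (IntermediateField.adjoin (FractionRing (PowerSeries (PowerSeries K))) {α}) ∧
        IsCyclic ((IntermediateField.adjoin (FractionRing (PowerSeries (PowerSeries K))) {α}) ≃ₐ[FractionRing (PowerSeries (PowerSeries K))]
          (IntermediateField.adjoin (FractionRing (PowerSeries (PowerSeries K))) {α}))) :=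
  frac_power_series_two_vars_not_power_and_cyclic_general K q hq ζ hζ
end
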